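/- arXiv:1001.4427 — 3 statements merged into one kernel-verified Lean document; each statement's English description precedes it below -/
import Mathlib

section
/- A set ζ of non-empty derivations over an ARS is the extension of some intensional strategy with memory if and only if ζ is closed, i.e., ζ contains all its limit points, where a limit point of ζ is a derivation π each of whose finite prefixes is a finite prefix of some derivation in ζ (and ζ is closed under non-empty prefixes). -/
/-- A derivation over objects `O` and labels `L`: a partial function on ℕ whose
domain is an initial segment, with composable consecutive steps. -/
structure Deriv (O L : Type) where
  step : ℕ → Option (O × L × O)
  initial : ∀ i, step (i + 1) ≠ none → step i ≠ none
  comp : ∀ i s t, step i = some s → step (i + 1) = some t → t.1 = s.2.2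

namespace Deriv
/-- Non-empty derivation. -/
def NE {O L : Type} (π : Deriv O L) : Prop := π.step 0 ≠ none
/-- Finite derivation. -/
def Finite {O L : Type} (π : Deriv O L) : Prop := ∃ n, π.step n = none
/-- Derivation over the set of steps `Γ` of an ARS. -/
def Over {O L : Type} (Γ : Set (O × L × O)) (π : Deriv O L) : Prop :=
  ∀ i s, π.step i = some s → s ∈ Γ
end Deriv

/-- `π₀` is a prefix of `π`. -/
def DPrefix {O L : Type} (π₀ π : Deriv O L) : Prop :=
  ∀ i s, π₀.step i = some s → π.step i = some s

/-- History (trace) of the first `j` steps of a derivation. -/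
def histD {O L : Type} (π : Deriv O L) (j : ℕ) : List (O × L) :=
  (List.range j).filterMap fun i => (π.step i).map fun s => (s.1, s.2.1)

/-- Extension of an intensional strategy with memory. -/
def ExtOf {O L : Type} (lam : List (O × L) → O → Set (O × L × O)) : Set (Deriv O L) :=
  {π | π.NE ∧ ∀ j s, π.step j = some s → s ∈ lam (histD π j) s.1}

/-- Extension of a memoryless intensional strategy. -/
def MExtOf {O L : Type} (lam : O → Set (O × L × O)) : Set (Deriv O L) :=
  {π | π.NE ∧ ∀ j s, π.step j = some s → s ∈ lam s.1}

/-- Well-formedness of an intensional strategy with memory over the ARS `Γ`: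
every chosen step has the current object as source and belongs to `Γ`. -/
def WfStrat {O L : Type} (Γ : Set (O × L × O))
    (lam : List (O × L) → O → Set (O × L × O)) : Prop :=
  ∀ α a s, s ∈ lam α a → s.1 = a ∧ s ∈ Γ

/-- Well-formedness of a memoryless intensional strategy. -/
def MWfStrat {O L : Type} (Γ : Set (O × L × O)) (lam : O → Set (O × L × O)) : Prop :=
  ∀ a s, s ∈ lam a → s.1 = a ∧ s ∈ Γ

/-- `Γ` is a functional relation. -/
def FunctionalARS {O L : Type} (Γ : Set (O × L × O)) : Prop :=
  ∀ a φ b₁ b₂, (a, φ, b₁) ∈ Γ → (a, φ, b₂) ∈ Γ → b₁ = b₂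

/-- `π` is a limit point of `ζ`: every finite non-empty prefix of `π` is a
prefix of some member of `ζ`. -/
def LimPt {O L : Type} (ζ : Set (Deriv O L)) (π : Deriv O L) : Prop :=
  π.NE ∧ ∀ π₀ : Deriv O L, π₀.Finite → π₀.NE → DPrefix π₀ π → ∃ π' ∈ ζ, DPrefix π₀ π'

/-- `ζ` is closed: it contains all its limit points. -/
def ClosedStrat {O L : Type} (ζ : Set (Deriv O L)) : Prop :=
  ∀ π, LimPt ζ π → π ∈ ζ

/-- `ζ` is closed under non-empty prefixes. -/
def PrefClosed {O L : Type} (ζ : Set (Deriv O L)) : Prop :=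
  ∀ π ∈ ζ, ∀ π₀ : Deriv O L, π₀.NE → DPrefix π₀ π → π₀ ∈ ζ

/-!
The extension of any strategy is closed and prefix-closed, because whether a
derivation obeys the strategy is decided step by step, each step only looking at
the finite history before it.

Conversely, let `ζ` be closed and take the canonical strategy which, after a
history `α`, allows exactly the steps that members of `ζ` take after the history
`α`. Every member of `ζ` obeys it. If `π` obeys it, then every finite prefix of
`π` ending with a step `s` is matched by some member of `ζ` that has the same
history and then takes `s`. A history together with the step that follows it
determines all the steps before, since the target of each step is the source of
the next one. So `π` is a limit point of `ζ`, and therefore lies in `ζ`.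
-/

section

variable {O L : Type}

namespace Deriv

theorem step_ne_none_of_le (π : Deriv O L) {i n : ℕ} (hn : π.step n ≠ none) (hin : i ≤ n) :
    π.step i ≠ none := by
  induction hin with
  | refl => exact hn
  | step _ ih => exact ih (π.initial _ hn)

theorem exists_last_step {π : Deriv O L} (hfin : π.Finite) (hne : π.NE) :
    ∃ k s, π.step k = some s ∧ π.step (k + 1) = none := by
  classical
  have hpos : Nat.find hfin ≠ 0 := fun h0 => hne (h0 ▸ Nat.find_spec hfin)
  obtain ⟨k, hk⟩ := Nat.exists_eq_succ_of_ne_zero hpos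
  obtain ⟨s, hs⟩ := Option.ne_none_iff_exists'.mp (Nat.find_min hfin (m := k) (by omega))
  exact ⟨k, s, hs, by simpa [hk] using Nat.find_spec hfin⟩

def trunc (π : Deriv O L) (n : ℕ) : Deriv O L where
  step i := if i < n then π.step i else none
  initial i h := by
    by_cases hi : i + 1 < n
    · rw [if_pos (by omega)]
      exact π.initial i (by rwa [if_pos hi] at h)
    · exact absurd (if_neg hi) h
  comp i s t hs ht := by
    by_cases hi : i + 1 < n
    · rw [if_pos (by omega)] at hs
      rw [if_pos hi] at ht
      exact π.comp i s t hs ht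
    · rw [if_neg hi] at ht
      cases ht

theorem trunc_step_of_lt (π : Deriv O L) {n i : ℕ} (hi : i < n) :
    (π.trunc n).step i = π.step i :=
  if_pos hi

theorem trunc_finite (π : Deriv O L) (n : ℕ) : (π.trunc n).Finite :=
  ⟨n, if_neg (lt_irrefl n)⟩

theorem trunc_dPrefix (π : Deriv O L) (n : ℕ) : DPrefix (π.trunc n) π := by
  intro i s hs
  by_cases hi : i < n
  · rwa [trunc_step_of_lt π hi] at hs
  · exact absurd hs (by simp [trunc, hi])

end Deriv

theorem DPrefix.step_eq {π₀ π : Deriv O L} (h : DPrefix π₀ π) {i : ℕ}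
    (hi : π₀.step i ≠ none) :
    π.step i = π₀.step i := by
  obtain ⟨s, hs⟩ := Option.ne_none_iff_exists'.mp hi
  rw [hs, h i s hs]

theorem histD_congr {π π' : Deriv O L} {j : ℕ} (h : ∀ i < j, π.step i = π'.step i) :
    histD π j = histD π' j :=
  List.filterMap_congr fun i hi => by rw [h i (List.mem_range.mp hi)]

theorem histD_succ {π : Deriv O L} {n : ℕ} {s : O × L × O} (hs : π.step n = some s) :
    histD π (n + 1) = histD π n ++ [(s.1, s.2.1)] := by
  simp [histD, List.range_succ, List.filterMap_append, hs]

theorem histD_length {π : Deriv O L} {n : ℕ} (hn : π.step n ≠ none) :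
    (histD π n).length = n := by
  induction n with
  | zero => rfl
  | succ k ih =>
    obtain ⟨s, hs⟩ := Option.ne_none_iff_exists'.mp (π.initial k hn)
    rw [histD_succ hs, List.length_append, ih (π.initial k hn), List.length_singleton]

theorem DPrefix.histD_eq {π₀ π : Deriv O L} (h : DPrefix π₀ π) {j : ℕ}
    (hj : π₀.step j ≠ none) :
    histD π₀ j = histD π j :=
  histD_congr fun _ hi => (h.step_eq (π₀.step_ne_none_of_le hj hi.le)).symm

/-- The history records source and label of each step, and the target of a step is the
source of the next one. -/
theorem Deriv.step_eq_of_histD_eq {π π' : Deriv O L} {k : ℕ} {s : O × L × O}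
    (hs : π.step k = some s) (hs' : π'.step k = some s) (hh : histD π k = histD π' k) :
    ∀ i ≤ k, π.step i = π'.step i := by
  induction k generalizing s with
  | zero =>
    intro i hi
    rw [Nat.le_zero.mp hi, hs, hs']
  | succ k ih =>
    obtain ⟨t, ht⟩ := Option.ne_none_iff_exists'.mp (π.initial k (by simp [hs]))
    obtain ⟨t', ht'⟩ := Option.ne_none_iff_exists'.mp (π'.initial k (by simp [hs']))
    rw [histD_succ ht, histD_succ ht'] at hh
    obtain ⟨hhk, hlast⟩ := List.append_inj' hh rfl
    simp only [List.cons.injEq, Prod.mk.injEq, and_true] at hlast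
    have htarget : t.2.2 = t'.2.2 := (π.comp k t s ht hs).symm.trans (π'.comp k t' s ht' hs')
    have htt' : t = t' := Prod.ext hlast.1 (Prod.ext hlast.2 htarget)
    subst htt'
    intro i hi
    rcases Nat.le_succ_iff.mp hi with hik | rfl
    · exact ih ht ht' hhk i hik
    · rw [hs, hs']

section Extension

variable {lam : List (O × L) → O → Set (O × L × O)}

theorem closedStrat_extOf : ClosedStrat (ExtOf lam) := by
  rintro π ⟨hne, hlim⟩
  refine ⟨hne, fun j s hjs => ?_⟩
  have hj : (π.trunc (j + 1)).step j ≠ none := by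
    rw [π.trunc_step_of_lt (Nat.lt_succ_self j), hjs]
    exact Option.some_ne_none s
  obtain ⟨π', ⟨-, hπ'⟩, hpref'⟩ := hlim (π.trunc (j + 1)) (π.trunc_finite _)
    (by rw [Deriv.NE, π.trunc_step_of_lt j.succ_pos]; exact hne) (π.trunc_dPrefix _)
  have hstep : π'.step j = some s := by
    rw [hpref'.step_eq hj, π.trunc_step_of_lt (Nat.lt_succ_self j), hjs]
  have hhist : histD π' j = histD π j :=
    (hpref'.histD_eq hj).symm.trans ((π.trunc_dPrefix _).histD_eq hj)
  simpa [hhist] using hπ' j s hstep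

theorem prefClosed_extOf : PrefClosed (ExtOf lam) := by
  rintro π ⟨-, hπ⟩ π₀ hne hpref
  refine ⟨hne, fun j s hjs => ?_⟩
  rw [hpref.histD_eq (by simp [hjs])]
  exact hπ j s (hpref j s hjs)

end Extension

def canonStrat (Γ : Set (O × L × O)) (ζ : Set (Deriv O L)) :
    List (O × L) → O → Set (O × L × O) :=
  fun α a =>
    {s | s ∈ Γ ∧ s.1 = a ∧ ∃ π ∈ ζ, histD π α.length = α ∧ π.step α.length = some s}

section Canonical

variable {Γ : Set (O × L × O)} {ζ : Set (Deriv O L)}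

theorem wfStrat_canonStrat : WfStrat Γ (canonStrat Γ ζ) :=
  fun _ _ _ hs => ⟨hs.2.1, hs.1⟩

theorem subset_extOf_canonStrat (hne : ∀ π ∈ ζ, π.NE) (hover : ∀ π ∈ ζ, π.Over Γ) :
    ζ ⊆ ExtOf (canonStrat Γ ζ) := by
  intro π hπ
  refine ⟨hne π hπ, fun j s hjs => ?_⟩
  have hlen : (histD π j).length = j := histD_length (by simp [hjs])
  exact ⟨hover π hπ j s hjs, rfl, π, hπ, by rw [hlen], by rw [hlen]; exact hjs⟩

theorem extOf_canonStrat_subset (hcl : ClosedStrat ζ) : ExtOf (canonStrat Γ ζ) ⊆ ζ := by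
  rintro π ⟨hne, hπ⟩
  refine hcl π ⟨hne, fun π₀ hfin hne₀ hpref => ?_⟩
  obtain ⟨k, s, hs, hlast⟩ := Deriv.exists_last_step hfin hne₀
  have hπk : π.step k = some s := hpref k s hs
  obtain ⟨-, -, π', hπ', hhist, hstep⟩ := hπ k s hπk
  rw [histD_length (by simp [hπk])] at hhist hstep
  have hagree := Deriv.step_eq_of_histD_eq hπk hstep hhist.symm
  refine ⟨π', hπ', fun i t ht => ?_⟩
  have hik : i ≤ k := not_lt.mp fun hki => π₀.step_ne_none_of_le (by simp [ht]) hki hlast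
  rw [← hagree i hik]
  exact hpref i t ht

end Canonical

end

theorem extension_characterization_general
    (O L : Type) (Γ : Set (O × L × O))
    (ζ : Set (Deriv O L))
    (hne : ∀ π ∈ ζ, π.NE) (hover : ∀ π ∈ ζ, π.Over Γ) :
    (∃ lam, WfStrat Γ lam ∧ ExtOf lam = ζ) ↔ (ClosedStrat ζ ∧ PrefClosed ζ) := by
  constructor
  · rintro ⟨lam, -, rfl⟩
    exact ⟨closedStrat_extOf, prefClosed_extOf⟩
  · rintro ⟨hcl, -⟩
    exact ⟨canonStrat Γ ζ, wfStrat_canonStrat,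
      (extOf_canonStrat_subset hcl).antisymm (subset_extOf_canonStrat hne hover)⟩

/-- a set of non-empty derivations over an ARS is the extension of
some intensional strategy with memory iff it is closed (contains all its limit
points) and closed under non-empty prefixes. -/
theorem extension_characterization
    (O L : Type) (Γ : Set (O × L × O)) (hΓ : FunctionalARS Γ)
    (ζ : Set (Deriv O L))
    (hne : ∀ π ∈ ζ, π.NE) (hover : ∀ π ∈ ζ, π.Over Γ) :
    (∃ lam, WfStrat Γ lam ∧ ExtOf lam = ζ) ↔ (ClosedStrat ζ ∧ PrefClosed ζ) :=
  extension_characterization_general O L Γ ζ hne hover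
end

section
/- The class of abstract strategies that arise as extensions of intensional strategies with memory is closed under arbitrary intersections and finite unions, but is not closed under complement. -/
/-!
Intersections are taken pointwise: `⋂ i, lam i`. For a union the pointwise union of the two
strategies is too large, since a derivation could alternate between them; instead each strategy
is allowed to move only while the trace so far is one it could have produced itself. Traces
record only sources and labels of steps, which suffices because `Γ` is functional.

Extensions are closed under non-empty prefixes, whereas complements need not be: over the
one-point ARS with a single loop, the complement of the one-step derivations contains the
two-step derivation but not its one-step prefix.
-/

open Set

section Derivations

variable {O L : Type}

theorem Deriv.step_ne_none_of_le_s4 (π : Deriv O L) {i j : ℕ} (hij : i ≤ j) (hj : π.step j ≠ none) :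
    π.step i ≠ none := by
  induction j, hij using Nat.le_induction with
  | base => exact hj
  | succ n _ ih => exact ih (π.initial n hj)

theorem histD_zero (π : Deriv O L) : histD π 0 = [] := rfl

theorem histD_succ_of_some (π : Deriv O L) {j : ℕ} {s : O × L × O} (h : π.step j = some s) :
    histD π (j + 1) = histD π j ++ [(s.1, s.2.1)] := by
  simp [histD, List.range_succ, h]

theorem histD_succ_of_none (π : Deriv O L) {j : ℕ} (h : π.step j = none) :
    histD π (j + 1) = histD π j := by
  simp [histD, List.range_succ, h]

theorem histD_eq_of_dPrefix {π₀ π : Deriv O L} (hpre : DPrefix π₀ π) {j : ℕ}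
    (hj : π₀.step j ≠ none) : histD π₀ j = histD π j := by
  unfold histD
  refine List.filterMap_congr fun i hi => ?_
  obtain ⟨t, ht⟩ := Option.ne_none_iff_exists'.mp
    (π₀.step_ne_none_of_le_s4 (List.mem_range.mp hi).le hj)
  rw [ht, hpre i t ht]

theorem extOf_prefClosed (lam : List (O × L) → O → Set (O × L × O)) : PrefClosed (ExtOf lam) :=
  fun π hπ _ hNE hpre => ⟨hNE, fun j s hs => by
    rw [histD_eq_of_dPrefix hpre (by simp [hs])]
    exact hπ.2 j s (hpre j s hs)⟩

theorem WfStrat.over_of_mem_extOf {Γ : Set (O × L × O)} {lam : List (O × L) → O → Set (O × L × O)}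
    (hlam : WfStrat Γ lam) {π : Deriv O L} (hπ : π ∈ ExtOf lam) : π.Over Γ :=
  fun j s hs => (hlam _ _ s (hπ.2 j s hs)).2

end Derivations

section Intersection

variable {O L : Type} {ι : Sort*} [Nonempty ι] {lam : ι → List (O × L) → O → Set (O × L × O)}

theorem WfStrat.iInter {Γ : Set (O × L × O)} (h : ∀ i, WfStrat Γ (lam i)) :
    WfStrat Γ fun α a => ⋂ i, lam i α a :=
  fun α a s hs => h (Classical.arbitrary ι) α a s (mem_iInter.mp hs _)

theorem extOf_iInter : ExtOf (fun α a => ⋂ i, lam i α a) = ⋂ i, ExtOf (lam i) := by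
  ext π
  simp only [ExtOf, mem_iInter]
  exact ⟨fun ⟨hNE, h⟩ i => ⟨hNE, fun j s hs => h j s hs i⟩,
    fun h => ⟨(h (Classical.arbitrary ι)).1, fun j s hs i => (h i).2 j s hs⟩⟩

end Intersection

section Union

variable {O L : Type} {Γ : Set (O × L × O)} {lam lam₁ lam₂ : List (O × L) → O → Set (O × L × O)}

inductive StratTrace (lam : List (O × L) → O → Set (O × L × O)) : List (O × L) → Prop
  | nil : StratTrace lam []
  | snoc {α : List (O × L)} {a : O} {l : L} {b : O} :
      StratTrace lam α → (a, l, b) ∈ lam α a → StratTrace lam (α ++ [(a, l)])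

theorem stratTrace_append_singleton_iff {α : List (O × L)} {a : O} {l : L} :
    StratTrace lam (α ++ [(a, l)]) ↔ StratTrace lam α ∧ ∃ b, (a, l, b) ∈ lam α a := by
  refine ⟨fun h => ?_, fun ⟨hα, _, hb⟩ => .snoc hα hb⟩
  generalize hβ : α ++ [(a, l)] = β at h
  cases h with
  | nil => simp at hβ
  | snoc hα hb =>
    obtain ⟨rfl, hal⟩ := List.append_inj' hβ.symm rfl
    simp only [List.cons.injEq, Prod.mk.injEq, and_true] at hal
    obtain ⟨rfl, rfl⟩ := hal
    exact ⟨hα, _, hb⟩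

theorem stratTrace_histD_iff (π : Deriv O L) (j : ℕ) :
    StratTrace lam (histD π j) ↔
      ∀ i < j, ∀ t, π.step i = some t → ∃ b, (t.1, t.2.1, b) ∈ lam (histD π i) t.1 := by
  induction j with
  | zero => simp [histD_zero, StratTrace.nil]
  | succ j ih =>
    rw [Nat.forall_lt_succ_right]
    cases h : π.step j with
    | none => simp [histD_succ_of_none π h, ih]
    | some t => simp [histD_succ_of_some π h, stratTrace_append_singleton_iff, ih]

theorem WfStrat.mem_of_label_mem (hΓ : FunctionalARS Γ) (hlam : WfStrat Γ lam)
    {α : List (O × L)} {a : O} {t : O × L × O} {b : O} (ht : t ∈ Γ)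
    (hb : (t.1, t.2.1, b) ∈ lam α a) : t ∈ lam α a := by
  obtain ⟨a', l, c⟩ := t
  obtain rfl := hΓ a' l b c (hlam α a _ hb).2 ht
  exact hb

theorem stratTrace_histD_iff_of_functional (hΓ : FunctionalARS Γ) (hlam : WfStrat Γ lam)
    {π : Deriv O L} (hπ : π.Over Γ) (j : ℕ) :
    StratTrace lam (histD π j) ↔ ∀ i < j, ∀ t, π.step i = some t → t ∈ lam (histD π i) t.1 := by
  rw [stratTrace_histD_iff]
  exact forall₄_congr fun i _ t ht =>
    ⟨fun ⟨_, hb⟩ => hlam.mem_of_label_mem hΓ (hπ i t ht) hb, fun h => ⟨_, h⟩⟩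

def unionStrat (lam₁ lam₂ : List (O × L) → O → Set (O × L × O)) :
    List (O × L) → O → Set (O × L × O) :=
  fun α a => {s ∈ lam₁ α a | StratTrace lam₁ α} ∪ {s ∈ lam₂ α a | StratTrace lam₂ α}

theorem unionStrat_comm : unionStrat lam₁ lam₂ = unionStrat lam₂ lam₁ := by
  funext α a
  exact union_comm _ _

theorem WfStrat.unionStrat (h₁ : WfStrat Γ lam₁) (h₂ : WfStrat Γ lam₂) :
    WfStrat Γ (unionStrat lam₁ lam₂) := by
  rintro α a s (⟨hs, -⟩ | ⟨hs, -⟩)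
  exacts [h₁ α a s hs, h₂ α a s hs]

theorem extOf_subset_extOf_unionStrat_left : ExtOf lam₁ ⊆ ExtOf (unionStrat lam₁ lam₂) :=
  fun π hπ => ⟨hπ.1, fun j s hs => Or.inl
    ⟨hπ.2 j s hs, (stratTrace_histD_iff π j).2 fun i _ t ht => ⟨_, hπ.2 i t ht⟩⟩⟩

theorem mem_extOf_right_of_mem_extOf_unionStrat (hΓ : FunctionalARS Γ) (h₁ : WfStrat Γ lam₁)
    (h₂ : WfStrat Γ lam₂) {π : Deriv O L} (hπ : π ∈ ExtOf (unionStrat lam₁ lam₂))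
    (hπ₁ : π ∉ ExtOf lam₁) : π ∈ ExtOf lam₂ := by
  have hΓπ : π.Over Γ := (h₁.unionStrat h₂).over_of_mem_extOf hπ
  obtain ⟨j, s, hs, hs₁⟩ : ∃ j s, π.step j = some s ∧ s ∉ lam₁ (histD π j) s.1 := by
    by_contra! h
    exact hπ₁ ⟨hπ.1, h⟩
  have hj₂ : s ∈ lam₂ (histD π j) s.1 ∧ StratTrace lam₂ (histD π j) :=
    (hπ.2 j s hs).resolve_left fun h => hs₁ h.1
  refine ⟨hπ.1, fun k t ht => ?_⟩
  rcases lt_trichotomy k j with hkj | rfl | hjk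
  · exact (stratTrace_histD_iff_of_functional hΓ h₂ hΓπ j).1 hj₂.2 k hkj t ht
  · obtain rfl : t = s := Option.some.inj (ht.symm.trans hs)
    exact hj₂.1
  · refine ((hπ.2 k t ht).resolve_left fun h => hs₁ ?_).1
    exact (stratTrace_histD_iff_of_functional hΓ h₁ hΓπ k).1 h.2 j hjk s hs

theorem extOf_unionStrat (hΓ : FunctionalARS Γ) (h₁ : WfStrat Γ lam₁) (h₂ : WfStrat Γ lam₂) :
    ExtOf (unionStrat lam₁ lam₂) = ExtOf lam₁ ∪ ExtOf lam₂ := by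
  refine subset_antisymm (fun π hπ => ?_) (union_subset extOf_subset_extOf_unionStrat_left ?_)
  · by_cases hπ₁ : π ∈ ExtOf lam₁
    · exact Or.inl hπ₁
    · exact Or.inr (mem_extOf_right_of_mem_extOf_unionStrat hΓ h₁ h₂ hπ hπ₁)
  · rw [unionStrat_comm]
    exact extOf_subset_extOf_unionStrat_left

end Union

section Complement

def Deriv.loop (n : ℕ) : Deriv Unit Unit where
  step i := if i < n then some ((), (), ()) else none
  initial i h := by
    simp only [ne_eq, ite_eq_right_iff, reduceCtorEq, imp_false, not_not] at h ⊢
    omega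
  comp _ _ _ _ _ := rfl

theorem Deriv.loop_dPrefix {m n : ℕ} (h : m ≤ n) : DPrefix (loop m) (loop n) := by
  intro i s hs
  simp only [loop] at hs ⊢
  split_ifs at hs with hi
  · rw [if_pos (by omega), hs]

def firstStepOnly : List (Unit × Unit) → Unit → Set (Unit × Unit × Unit) :=
  fun α _ => {_s | α = []}

theorem loop_one_mem_extOf_firstStepOnly : Deriv.loop 1 ∈ ExtOf firstStepOnly := by
  refine ⟨by simp [Deriv.NE, Deriv.loop], fun j s hs => ?_⟩
  obtain rfl : j = 0 := by by_contra; simp_all [Deriv.loop]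
  rfl

theorem loop_two_not_mem_extOf_firstStepOnly : Deriv.loop 2 ∉ ExtOf firstStepOnly := by
  intro h
  have := h.2 1 ((), (), ()) (by simp [Deriv.loop])
  simp [firstStepOnly, histD, Deriv.loop] at this

theorem not_prefClosed_compl_extOf_firstStepOnly :
    ¬ PrefClosed {π : Deriv Unit Unit | π.NE ∧ π.Over univ ∧ π ∉ ExtOf firstStepOnly} := by
  intro h
  have := h _ ⟨by simp [Deriv.NE, Deriv.loop], fun _ _ _ => trivial,
    loop_two_not_mem_extOf_firstStepOnly⟩ _ loop_one_mem_extOf_firstStepOnly.1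
    (Deriv.loop_dPrefix one_le_two)
  exact this.2.2 loop_one_mem_extOf_firstStepOnly

end Complement

/-- the class of abstract strategies arising as extensions of
intensional strategies with memory is closed under arbitrary (non-empty-indexed)
intersections and finite unions, but not under complement (relative to the set
of non-empty derivations over the ARS). -/
theorem extension_class_closure_properties :
    (∀ (O L : Type) (Γ : Set (O × L × O)), FunctionalARS Γ →
      ∀ (ι : Type), Nonempty ι → ∀ ζ : ι → Set (Deriv O L),
        (∀ i, ∃ lam, WfStrat Γ lam ∧ ExtOf lam = ζ i) →
        ∃ lam, WfStrat Γ lam ∧ ExtOf lam = ⋂ i, ζ i) ∧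
    (∀ (O L : Type) (Γ : Set (O × L × O)), FunctionalARS Γ →
      ∀ ζ₁ ζ₂ : Set (Deriv O L),
        (∃ lam, WfStrat Γ lam ∧ ExtOf lam = ζ₁) →
        (∃ lam, WfStrat Γ lam ∧ ExtOf lam = ζ₂) →
        ∃ lam, WfStrat Γ lam ∧ ExtOf lam = ζ₁ ∪ ζ₂) ∧
    (∃ (O L : Type) (Γ : Set (O × L × O)), FunctionalARS Γ ∧
      ∃ ζ : Set (Deriv O L), (∃ lam, WfStrat Γ lam ∧ ExtOf lam = ζ) ∧
        ¬ ∃ lam, WfStrat Γ lam ∧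
            ExtOf lam = {π : Deriv O L | π.NE ∧ π.Over Γ ∧ π ∉ ζ}) := by
  refine ⟨?_, ?_, ?_⟩
  · intro O L Γ _ ι _ ζ h
    choose lam hwf hext using h
    exact ⟨_, WfStrat.iInter hwf, by simp only [extOf_iInter, hext]⟩
  · rintro O L Γ hΓ _ _ ⟨lam₁, h₁, rfl⟩ ⟨lam₂, h₂, rfl⟩
    exact ⟨_, h₁.unionStrat h₂, extOf_unionStrat hΓ h₁ h₂⟩
  · refine ⟨Unit, Unit, univ, fun _ _ _ _ _ _ => rfl, _,
      ⟨firstStepOnly, fun _ _ _ _ => ⟨rfl, trivial⟩, rfl⟩, ?_⟩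
    rintro ⟨lam, -, hext⟩
    exact not_prefClosed_compl_extOf_firstStepOnly (hext ▸ extOf_prefClosed lam)
end

section
/- There exist an ARS and memoryless intensional strategies λ₁, λ₂ such that the extension of their pointwise union λ₁ ∪ λ₂ strictly contains the union of their extensions: ⟦λ₁ ∪ λ₂⟧ ≠ ⟦λ₁⟧ ∪ ⟦λ₂⟧. -/
/-!
Memoryless strategies choose steps by the current object alone, so their pointwise union may
follow one strategy at some objects and the other at the rest along the same derivation. On two
objects that swap into each other, let `λ₁` allow only the swap out of `false` and `λ₂` only the
swap out of `true`: the alternating derivation `false → true → false → ⋯` needs both.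
-/

def Deriv.ofSeq {O L : Type} (x : ℕ → O × L × O) (hx : ∀ i, (x (i + 1)).1 = (x i).2.2) :
    Deriv O L where
  step i := some (x i)
  initial _ _ := Option.some_ne_none _
  comp i s t hs ht := by
    cases hs
    cases ht
    exact hx i

section MExtOf

variable {O L : Type} {lam lam' lam₁ lam₂ : O → Set (O × L × O)}

theorem MExtOf_mono (h : ∀ a, lam a ⊆ lam' a) : MExtOf lam ⊆ MExtOf lam' :=
  fun _ ⟨hne, hπ⟩ => ⟨hne, fun j s hs => h _ (hπ j s hs)⟩

theorem union_MExtOf_subset_MExtOf_union :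
    MExtOf lam₁ ∪ MExtOf lam₂ ⊆ MExtOf (fun a => lam₁ a ∪ lam₂ a) :=
  Set.union_subset (MExtOf_mono fun _ => Set.subset_union_left)
    (MExtOf_mono fun _ => Set.subset_union_right)

theorem notMem_MExtOf_of_step {π : Deriv O L} {j : ℕ} {s : O × L × O}
    (hs : π.step j = some s) (hns : s ∉ lam s.1) : π ∉ MExtOf lam :=
  fun h => hns (h.2 j s hs)

theorem union_MExtOf_ssubset_MExtOf_union {π : Deriv O L} {i j : ℕ} {s t : O × L × O}
    (hπ : π ∈ MExtOf (fun a => lam₁ a ∪ lam₂ a))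
    (hs : π.step i = some s) (hs₁ : s ∉ lam₁ s.1) (ht : π.step j = some t) (ht₂ : t ∉ lam₂ t.1) :
    MExtOf lam₁ ∪ MExtOf lam₂ ⊂ MExtOf (fun a => lam₁ a ∪ lam₂ a) :=
  (Set.ssubset_iff_of_subset union_MExtOf_subset_MExtOf_union).2
    ⟨π, hπ, not_or.2 ⟨notMem_MExtOf_of_step hs hs₁, notMem_MExtOf_of_step ht ht₂⟩⟩

end MExtOf

namespace BoolSwap

def swap (b : Bool) : Bool × Unit × Bool := (b, (), !b)

theorem functionalARS_range_swap : FunctionalARS (Set.range swap) := by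
  rintro a φ b₁ b₂ ⟨c₁, hc₁⟩ ⟨c₂, hc₂⟩
  simp only [swap, Prod.mk.injEq] at hc₁ hc₂
  rw [← hc₁.2.2, ← hc₂.2.2, hc₁.1, hc₂.1]

def swapFrom (b a : Bool) : Set (Bool × Unit × Bool) := {s | a = b ∧ s = swap b}

theorem mWfStrat_swapFrom (b : Bool) : MWfStrat (Set.range swap) (swapFrom b) := by
  rintro a s ⟨rfl, rfl⟩
  exact ⟨rfl, _, rfl⟩

theorem swap_notMem_swapFrom_not (b : Bool) : swap b ∉ swapFrom (!b) b := by
  cases b <;> simp [swapFrom]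

def alternating : Deriv Bool Unit :=
  Deriv.ofSeq (fun i => swap i.bodd) fun i => by simp [swap]

theorem alternating_step (i : ℕ) : alternating.step i = some (swap i.bodd) := rfl

theorem alternating_mem_MExtOf :
    alternating ∈ MExtOf (fun a => swapFrom false a ∪ swapFrom true a) := by
  refine ⟨Option.some_ne_none _, fun j s hs => ?_⟩
  cases hs
  cases j.bodd <;> simp [swapFrom, swap]

end BoolSwap

open BoolSwap in
/-- there exist an ARS and memoryless intensional strategies
λ₁, λ₂ such that the extension of their pointwise union strictly contains the
union of their extensions. -/
theorem pointwise_union_not_union_of_extensions :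
    ∃ (O L : Type) (Γ : Set (O × L × O)), FunctionalARS Γ ∧
      ∃ lam₁ lam₂ : O → Set (O × L × O), MWfStrat Γ lam₁ ∧ MWfStrat Γ lam₂ ∧
        MExtOf lam₁ ∪ MExtOf lam₂ ⊂ MExtOf (fun a => lam₁ a ∪ lam₂ a) :=
  ⟨Bool, Unit, Set.range swap, functionalARS_range_swap, swapFrom false, swapFrom true,
    mWfStrat_swapFrom false, mWfStrat_swapFrom true,
    union_MExtOf_ssubset_MExtOf_union alternating_mem_MExtOf
      (alternating_step 1) (swap_notMem_swapFrom_not true)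
      (alternating_step 0) (swap_notMem_swapFrom_not false)⟩
end
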